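/- arXiv:2211.09231 — 6 statements merged into one kernel-verified Lean document; each statement's English description precedes it below -/
import Mathlib

section
/- Let G be a finite group acting on a finite set X, let Y be a finite set of labels, let l : X → Y be the ground-truth labeling, and let μ be a G-invariant probability mass function on X (μ(g•x) = μ(x) for all g ∈ G, x ∈ X). Define the accuracy of a classifier f : X → Y as acc(f) = Σ_{x∈X} μ(x)·[f(x) = l(x)], and for each x define k(x) = |l(G•x)|, the number of distinct ground-truth labels appearing on the orbit of x. Then every G-invariant classifier f (i.e., f(g•x) = f(x) for all g, x) satisfies acc(f) ≤ 1 − Σ_{x∈X} μ(x)·(k(x) − 1)/|G|. Equivalently, writing c_k = μ({x : k(x) = k}), acc(f) ≤ 1 − Σ_k c_k·(k−1)/|G|. -/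
/-- counting lemma: fiber of `f x` plus number of labels on the orbit is at most `|G| + 1`. -/
lemma fiber_card_bound {G X Y : Type*} [Group G] [Fintype G] [Fintype X] [Fintype Y]
    [MulAction G X] [DecidableEq Y] (l : X → Y) (f : X → Y) (x : X) :
    (Finset.univ.filter (fun g : G => f x = l (g • x))).card
      + (Finset.univ.image (fun g : G => l (g • x))).card ≤ Fintype.card G + 1 := by
  classical
  set φ : G → Y := fun g => l (g • x) with hφ
  set T : Finset Y := Finset.univ.image φ with hT
  have hcard : Fintype.card G = ∑ y ∈ T, (Finset.univ.filter (fun g => φ g = y)).card := by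
    rw [← Finset.card_univ]
    exact Finset.card_eq_sum_card_fiberwise (fun g _ => Finset.mem_image_of_mem φ (Finset.mem_univ g))
  have hfe : (Finset.univ.filter (fun g : G => f x = l (g • x)))
      = Finset.univ.filter (fun g => φ g = f x) := by
    apply Finset.filter_congr; intro g _; simp [hφ, eq_comm]
  by_cases hmem : f x ∈ T
  · have hsplit : Fintype.card G
        = (Finset.univ.filter (fun g => φ g = f x)).card
          + ∑ y ∈ T.erase (f x), (Finset.univ.filter (fun g => φ g = y)).card := by
      rw [hcard, ← Finset.add_sum_erase _ _ hmem]
    have hge : (T.erase (f x)).card ≤ ∑ y ∈ T.erase (f x), (Finset.univ.filter (fun g => φ g = y)).card := by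
      have := Finset.card_nsmul_le_sum (T.erase (f x))
        (fun y => (Finset.univ.filter (fun g => φ g = y)).card) 1 ?_
      · simpa using this
      · intro y hy
        have hy' : y ∈ T := Finset.mem_of_mem_erase hy
        obtain ⟨g, _, hg⟩ := Finset.mem_image.mp hy'
        have : g ∈ Finset.univ.filter (fun g => φ g = y) := by simp [hg]
        exact Finset.card_pos.mpr ⟨g, this⟩
    have herase : (T.erase (f x)).card = T.card - 1 := Finset.card_erase_of_mem hmem
    have hT1 : 1 ≤ T.card := Finset.card_pos.mpr ⟨f x, hmem⟩
    rw [hfe]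
    omega
  · have h0 : (Finset.univ.filter (fun g => φ g = f x)).card = 0 := by
      rw [Finset.card_eq_zero]
      ext g; simp only [Finset.mem_filter, Finset.mem_univ, true_and, Finset.notMem_empty, iff_false]
      intro h; exact hmem (by rw [← h]; exact Finset.mem_image_of_mem φ (Finset.mem_univ g))
    have hTle : T.card ≤ Fintype.card G := by
      calc T.card ≤ Finset.univ.card := Finset.card_image_le
        _ = Fintype.card G := Finset.card_univ
    rw [hfe]
    omega

/-- Proposition A.1 (loose accuracy upper bound). If `G` is a finite group acting on a
finite set `X`, `l : X → Y` is the ground-truth labeling, `μ` is a `G`-invariant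
probability mass function on `X`, and `f` is a `G`-invariant classifier, then
`acc(f) ≤ 1 - ∑ x, μ x * (k x - 1)/|G|` where `k x = |l(G•x)|`. -/
theorem accuracy_upper_bound_loose
    {G X Y : Type*} [Group G] [Fintype G] [Fintype X] [Fintype Y]
    [MulAction G X] [DecidableEq Y]
    (l : X → Y) (μ : X → ℝ)
    (hμ0 : ∀ x, 0 ≤ μ x) (hμ1 : ∑ x, μ x = 1)
    (hμG : ∀ (g : G) (x : X), μ (g • x) = μ x)
    (f : X → Y) (hf : ∀ (g : G) (x : X), f (g • x) = f x) :
    ∑ x, μ x * (if f x = l x then (1 : ℝ) else 0) ≤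
      1 - ∑ x, μ x *
        (((Set.ncard (l '' MulAction.orbit G x) : ℝ) - 1) / (Fintype.card G : ℝ)) := by
  classical
  have hnpos : 0 < Fintype.card G := Fintype.card_pos
  set n : ℝ := (Fintype.card G : ℝ) with hndef
  have hn0 : (0:ℝ) < n := by rw [hndef]; exact_mod_cast hnpos
  set k : X → ℕ := fun x => (Finset.univ.image (fun g : G => l (g • x))).card with hkdef
  have hk : ∀ x : X, Set.ncard (l '' MulAction.orbit G x) = k x := by
    intro x
    have h1 : l '' MulAction.orbit G x = ↑(Finset.univ.image (fun g : G => l (g • x))) := by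
      ext y
      simp only [MulAction.orbit, Set.mem_image, Finset.coe_image, Finset.coe_univ,
        Set.image_univ, Set.mem_range]
      constructor
      · rintro ⟨z, ⟨g, rfl⟩, rfl⟩; exact ⟨g, rfl⟩
      · rintro ⟨g, rfl⟩; exact ⟨g • x, ⟨g, rfl⟩, rfl⟩
    rw [h1, Set.ncard_coe_finset]
  set N : X → ℕ := fun x => (Finset.univ.filter (fun g : G => f x = l (g • x))).card with hNdef
  -- shift identity
  have hshift : ∀ g : G, (∑ x, μ x * (if f x = l x then (1:ℝ) else 0))
      = ∑ x, μ x * (if f x = l (g • x) then (1:ℝ) else 0) := by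
    intro g
    have h := Equiv.sum_comp (MulAction.toPerm g)
      (fun x => μ x * (if f x = l x then (1:ℝ) else 0))
    rw [← h]
    refine Finset.sum_congr rfl fun x _ => ?_
    simp only [MulAction.toPerm_apply]
    simp only [hμG, hf]
  have key : n * (∑ x, μ x * (if f x = l x then (1:ℝ) else 0))
      = ∑ x, μ x * (N x : ℝ) := by
    calc n * (∑ x, μ x * (if f x = l x then (1:ℝ) else 0))
        = ∑ _g : G, (∑ x, μ x * (if f x = l x then (1:ℝ) else 0)) := by
          rw [Finset.sum_const, nsmul_eq_mul, Finset.card_univ]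
      _ = ∑ g : G, ∑ x, μ x * (if f x = l (g • x) then (1:ℝ) else 0) :=
          Finset.sum_congr rfl fun g _ => hshift g
      _ = ∑ x, ∑ g : G, μ x * (if f x = l (g • x) then (1:ℝ) else 0) := Finset.sum_comm
      _ = ∑ x, μ x * (N x : ℝ) := by
          refine Finset.sum_congr rfl fun x _ => ?_
          have hb : (∑ g : G, if f x = l (g • x) then (1:ℝ) else 0)
              = ((Finset.univ.filter (fun g : G => f x = l (g • x))).card : ℝ) :=
            Finset.sum_boole (fun g : G => f x = l (g • x)) Finset.univ
          rw [← Finset.mul_sum, hb]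
  have hbound : ∀ x : X, (N x : ℝ) ≤ n + 1 - (k x : ℝ) := by
    intro x
    have := fiber_card_bound (G := G) l f x
    have h' : (N x : ℝ) + (k x : ℝ) ≤ n + 1 := by
      have : ((N x + k x : ℕ) : ℝ) ≤ ((Fintype.card G + 1 : ℕ) : ℝ) := by exact_mod_cast this
      push_cast at this
      linarith
    linarith
  have hsum : ∑ x, μ x * (N x : ℝ) ≤ ∑ x, μ x * (n + 1 - (k x : ℝ)) := by
    refine Finset.sum_le_sum fun x _ => ?_
    exact mul_le_mul_of_nonneg_left (hbound x) (hμ0 x)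
  have hrhs : ∑ x, μ x * (n + 1 - (k x : ℝ))
      = n * (1 - ∑ x, μ x * (((k x : ℝ) - 1) / n)) := by
    have hpt : ∀ x : X, μ x * (n + 1 - (k x : ℝ))
        = n * μ x - n * (μ x * (((k x : ℝ) - 1) / n)) := by
      intro x; field_simp; ring
    calc ∑ x, μ x * (n + 1 - (k x : ℝ))
        = ∑ x, (n * μ x - n * (μ x * (((k x : ℝ) - 1) / n))) :=
          Finset.sum_congr rfl fun x _ => hpt x
      _ = n * (∑ x, μ x) - n * ∑ x, μ x * (((k x : ℝ) - 1) / n) := by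
          rw [Finset.sum_sub_distrib, Finset.mul_sum, Finset.mul_sum]
      _ = n * (1 - ∑ x, μ x * (((k x : ℝ) - 1) / n)) := by rw [hμ1]; ring
  have hfinal : n * (∑ x, μ x * (if f x = l x then (1:ℝ) else 0))
      ≤ n * (1 - ∑ x, μ x * (((k x : ℝ) - 1) / n)) := by
    rw [key, ← hrhs]; exact hsum
  have hacc := le_of_mul_le_mul_left hfinal hn0
  calc ∑ x, μ x * (if f x = l x then (1:ℝ) else 0)
      ≤ 1 - ∑ x, μ x * (((k x : ℝ) - 1) / n) := hacc
    _ = 1 - ∑ x, μ x * (((Set.ncard (l '' MulAction.orbit G x) : ℝ) - 1) / n) := by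
        congr 1
        exact Finset.sum_congr rfl fun x _ => by rw [hk x]
end

section
/- Let G be a finite group acting on a finite set X, let Y be a finite set of labels, let l : X → Y be the ground-truth labeling, and let μ be a G-invariant probability mass function on X. For each x ∈ X define the consensus proportion p(x) = (max_{y∈Y} |{x' ∈ G•x : l(x') = y}|) / |G•x|, the fraction of points in the orbit of x carrying the majority ground-truth label. Then every G-invariant classifier f : X → Y satisfies acc(f) ≤ Σ_{x∈X} μ(x)·p(x). Equivalently, writing c_p = μ({x : p(x) = p}) for each attained value p, acc(f) ≤ Σ_p c_p·p. -/
/-- The paper's main Proposition (tight accuracy upper bound). If `G` is a finite group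
acting on a finite set `X`, `l : X → Y` is the ground-truth labeling, `μ` is a
`G`-invariant probability mass function, and `f` is a `G`-invariant classifier, then
`acc(f) ≤ ∑ x, μ x * p x` where `p x` is the consensus proportion of the orbit of `x`. -/
theorem accuracy_upper_bound_tight
    {G X Y : Type*} [Group G] [Fintype G] [Fintype X] [Fintype Y]
    [MulAction G X] [DecidableEq Y]
    (l : X → Y) (μ : X → ℝ)
    (hμ0 : ∀ x, 0 ≤ μ x) (hμ1 : ∑ x, μ x = 1)
    (hμG : ∀ (g : G) (x : X), μ (g • x) = μ x)
    (f : X → Y) (hf : ∀ (g : G) (x : X), f (g • x) = f x) :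
    ∑ x, μ x * (if f x = l x then (1 : ℝ) else 0) ≤
      ∑ x, μ x *
        (((Finset.univ.sup fun y : Y =>
            Set.ncard {x' ∈ MulAction.orbit G x | l x' = y} : ℕ) : ℝ) /
          (Set.ncard (MulAction.orbit G x) : ℝ)) := by
  classical
  set r := MulAction.orbitRel G X with hr
  have : Fintype (Quotient r) := Fintype.ofFinite _
  have key : ∀ F : X → ℝ, ∑ x, F x =
      ∑ q : Quotient r, ∑ x ∈ Finset.univ.filter
        (fun x => (Quotient.mk r x : Quotient r) = q), F x := by
    intro F
    exact (Finset.sum_fiberwise_of_maps_to (fun x _ => Finset.mem_univ _) F).symm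
  rw [key, key]
  apply Finset.sum_le_sum
  intro q _
  obtain ⟨x₀, hx₀⟩ := Quotient.exists_rep q
  set O : Finset X := Finset.univ.filter (fun x => (Quotient.mk r x : Quotient r) = q) with hO
  have hmemO : ∀ x, x ∈ O ↔ (Quotient.mk r x : Quotient r) = q := by
    intro x; simp [hO]
  have hx₀O : x₀ ∈ O := (hmemO x₀).mpr hx₀
  have hrel : ∀ x ∈ O, ∃ g : G, g • x₀ = x := by
    intro x hx
    have h1 : (Quotient.mk r x : Quotient r) = Quotient.mk r x₀ := by
      rw [(hmemO x).mp hx, hx₀]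
    have h2 : r x x₀ := Quotient.eq''.mp h1
    exact (MulAction.orbitRel_apply.mp h2)
  have hμconst : ∀ x ∈ O, μ x = μ x₀ := by
    intro x hx
    obtain ⟨g, hg⟩ := hrel x hx
    rw [← hg, hμG]
  have hfconst : ∀ x ∈ O, f x = f x₀ := by
    intro x hx
    obtain ⟨g, hg⟩ := hrel x hx
    rw [← hg, hf]
  -- the orbit of any x ∈ O is ↑O
  have horb : ∀ x ∈ O, MulAction.orbit G x = (↑O : Set X) := by
    intro x hx
    ext z
    rw [Finset.mem_coe, hmemO z]
    constructor
    · intro hz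
      have h1 : r z x := MulAction.orbitRel_apply.mpr hz
      rw [Quotient.sound h1]
      exact (hmemO x).mp hx
    · intro hz
      have h1 : (Quotient.mk r z : Quotient r) = Quotient.mk r x := by
        rw [hz, (hmemO x).mp hx]
      exact MulAction.orbitRel_apply.mp (Quotient.eq''.mp h1)
  -- counting sets as finset cards
  have hcount : ∀ x ∈ O, ∀ y : Y,
      Set.ncard {x' ∈ MulAction.orbit G x | l x' = y} = (O.filter (fun z => l z = y)).card := by
    intro x hx y
    have : {x' ∈ MulAction.orbit G x | l x' = y} = ↑(O.filter (fun z => l z = y)) := by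
      rw [horb x hx]
      ext z
      simp [Set.mem_setOf_eq]
    rw [this, Set.ncard_coe_finset]
  have hcard : ∀ x ∈ O, Set.ncard (MulAction.orbit G x) = O.card := by
    intro x hx
    rw [horb x hx, Set.ncard_coe_finset]
  set A : ℕ := Finset.univ.sup fun y : Y => (O.filter (fun z => l z = y)).card with hA
  have hOcard : 0 < O.card := Finset.card_pos.mpr ⟨x₀, hx₀O⟩
  -- RHS
  have hrhs : ∑ x ∈ O, μ x *
      (((Finset.univ.sup fun y : Y =>
          Set.ncard {x' ∈ MulAction.orbit G x | l x' = y} : ℕ) : ℝ) /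
        (Set.ncard (MulAction.orbit G x) : ℝ)) = μ x₀ * A := by
    have : ∀ x ∈ O, μ x *
        (((Finset.univ.sup fun y : Y =>
            Set.ncard {x' ∈ MulAction.orbit G x | l x' = y} : ℕ) : ℝ) /
          (Set.ncard (MulAction.orbit G x) : ℝ)) = μ x₀ * ((A : ℝ) / O.card) := by
      intro x hx
      rw [hμconst x hx, hcard x hx]
      have hsup : (Finset.univ.sup fun y : Y =>
          Set.ncard {x' ∈ MulAction.orbit G x | l x' = y}) = A :=
        Finset.sup_congr rfl (fun y _ => hcount x hx y)
      rw [hsup]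
    rw [Finset.sum_congr rfl this, Finset.sum_const, nsmul_eq_mul]
    field_simp
  -- LHS
  have hlhs : ∑ x ∈ O, μ x * (if f x = l x then (1 : ℝ) else 0) =
      μ x₀ * (O.filter (fun z => l z = f x₀)).card := by
    have : ∀ x ∈ O, μ x * (if f x = l x then (1 : ℝ) else 0) =
        μ x₀ * (if l x = f x₀ then (1 : ℝ) else 0) := by
      intro x hx
      rw [hμconst x hx, hfconst x hx]
      congr 1
      simp [eq_comm]
    rw [Finset.sum_congr rfl this, ← Finset.mul_sum, Finset.sum_boole]
  rw [hlhs, hrhs]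
  apply mul_le_mul_of_nonneg_left _ (hμ0 x₀)
  exact_mod_cast Finset.le_sup (f := fun y : Y => (O.filter (fun z => l z = y)).card)
    (Finset.mem_univ (f x₀))
end

section
/- Let G be a finite group acting on a finite set X, let Y be a finite set, let l : X → Y be the ground-truth labeling, and let μ be a G-invariant probability mass function on X. Define the consensus proportion p(x) = (max_{y∈Y} |{x' ∈ G•x : l(x') = y}|) / |G•x|. Then the upper bound Σ_{x∈X} μ(x)·p(x) is attained: there exists a G-invariant classifier f : X → Y with acc(f) = Σ_{x∈X} μ(x)·p(x), namely any classifier assigning to each orbit a ground-truth label of maximal multiplicity on that orbit. -/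
/-- Tightness of the paper's main Proposition: the bound `∑ x, μ x * p x` is attained
by some `G`-invariant classifier (any classifier assigning each orbit a ground-truth
label of maximal multiplicity on that orbit). -/
theorem accuracy_upper_bound_tight_attained
    {G X Y : Type*} [Group G] [Fintype G] [Fintype X] [Fintype Y]
    [MulAction G X] [DecidableEq Y]
    (l : X → Y) (μ : X → ℝ)
    (hμ0 : ∀ x, 0 ≤ μ x) (hμ1 : ∑ x, μ x = 1)
    (hμG : ∀ (g : G) (x : X), μ (g • x) = μ x) :
    ∃ f : X → Y, (∀ (g : G) (x : X), f (g • x) = f x) ∧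
      ∑ x, μ x * (if f x = l x then (1 : ℝ) else 0) =
        ∑ x, μ x *
          (((Finset.univ.sup fun y : Y =>
              Set.ncard {x' ∈ MulAction.orbit G x | l x' = y} : ℕ) : ℝ) /
            (Set.ncard (MulAction.orbit G x) : ℝ)) := by
  classical
  rcases isEmpty_or_nonempty X with hX | hX
  · exact ⟨l, fun g x => (hX.elim x), by simp⟩
  have hY : Nonempty Y := ⟨l (Classical.arbitrary X)⟩
  have hbest : ∀ S : Set X, ∃ y0 : Y,
      (Finset.univ.sup fun y : Y => Set.ncard {x' ∈ S | l x' = y}) =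
        Set.ncard {x' ∈ S | l x' = y0} := by
    intro S
    obtain ⟨y, -, hy⟩ := Finset.exists_mem_eq_sup Finset.univ Finset.univ_nonempty
      (fun y : Y => Set.ncard {x' ∈ S | l x' = y})
    exact ⟨y, hy⟩
  choose F hF using hbest
  refine ⟨fun x => F (MulAction.orbit G x), fun g x => congrArg F (MulAction.orbit_smul g x), ?_⟩
  have key : ∀ (t : X → ℝ),
      ∑ x, t x = ∑ c : Quotient (MulAction.orbitRel G X),
        ∑ x ∈ Finset.univ.filter
          (fun x => (⟦x⟧ : Quotient (MulAction.orbitRel G X)) = c), t x := by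
    intro t
    exact (Finset.sum_fiberwise Finset.univ _ t).symm
  rw [key, key]
  refine Finset.sum_congr rfl ?_
  intro c _
  obtain ⟨x0, rfl⟩ := c.exists_rep
  set O : Set X := MulAction.orbit G x0 with hO
  have hmem : ∀ x : X, ((⟦x⟧ : Quotient (MulAction.orbitRel G X)) = ⟦x0⟧) ↔ x ∈ O := by
    intro x
    rw [Quotient.eq]
    exact MulAction.orbitRel_apply
  have hfilter : (Finset.univ.filter
      (fun x => (⟦x⟧ : Quotient (MulAction.orbitRel G X)) = ⟦x0⟧)) =
      Finset.univ.filter (fun x => x ∈ O) := by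
    apply Finset.filter_congr
    intro x _
    simp [hmem x]
  rw [hfilter]
  set Ofin : Finset X := Finset.univ.filter (fun x => x ∈ O) with hOfin
  have hOfin_coe : (↑Ofin : Set X) = O := by
    ext x; simp [hOfin]
  have horb : ∀ x ∈ Ofin, MulAction.orbit G x = O := by
    intro x hx
    exact MulAction.orbit_eq_iff.mpr (by simpa [hOfin] using hx)
  have hμeq : ∀ x ∈ Ofin, μ x = μ x0 := by
    intro x hx
    obtain ⟨g, hg⟩ := (by simpa [hOfin] using hx : x ∈ O)
    rw [← hg]; exact hμG g x0
  have hx0 : x0 ∈ Ofin := by simp [hOfin, hO, MulAction.mem_orbit_self]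
  have hcard_pos : 0 < Ofin.card := Finset.card_pos.mpr ⟨x0, hx0⟩
  have hncardO : Set.ncard O = Ofin.card := by
    rw [← hOfin_coe, Set.ncard_coe_finset]
  -- count of the chosen label on the orbit, as a finset card
  have hcnt : ∀ y : Y, Set.ncard {x' ∈ O | l x' = y} =
      (Ofin.filter (fun x => l x = y)).card := by
    intro y
    rw [← Set.ncard_coe_finset]
    congr 1
    ext x; simp [hOfin]
  -- LHS
  have hLHS : ∑ x ∈ Ofin, μ x * (if F (MulAction.orbit G x) = l x then (1:ℝ) else 0) =
      μ x0 * ((Ofin.filter (fun x => l x = F O)).card : ℝ) := by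
    have h1 : ∑ x ∈ Ofin, μ x * (if F (MulAction.orbit G x) = l x then (1:ℝ) else 0) =
        ∑ x ∈ Ofin, μ x0 * (if F O = l x then (1:ℝ) else 0) :=
      Finset.sum_congr rfl (fun x hx => by rw [horb x hx, hμeq x hx])
    rw [h1, ← Finset.mul_sum]
    congr 1
    rw [Finset.sum_boole]
    have hcc : (Finset.filter (fun x => F O = l x) Ofin) =
        Finset.filter (fun x => l x = F O) Ofin := by
      ext x; simp [eq_comm]
    rw [hcc]
  have hRHS : ∑ x ∈ Ofin, μ x *
      (((Finset.univ.sup fun y : Y =>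
          Set.ncard {x' ∈ MulAction.orbit G x | l x' = y} : ℕ) : ℝ) /
        (Set.ncard (MulAction.orbit G x) : ℝ)) =
      μ x0 * ((Ofin.filter (fun x => l x = F O)).card : ℝ) := by
    have hterm : ∀ x ∈ Ofin, μ x *
        (((Finset.univ.sup fun y : Y =>
            Set.ncard {x' ∈ MulAction.orbit G x | l x' = y} : ℕ) : ℝ) /
          (Set.ncard (MulAction.orbit G x) : ℝ)) =
        μ x0 * (((Ofin.filter (fun x => l x = F O)).card : ℝ) / (Ofin.card : ℝ)) := by
      intro x hx
      rw [horb x hx, hμeq x hx, hF O, hcnt (F O), hncardO]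
    rw [Finset.sum_congr rfl hterm, Finset.sum_const, nsmul_eq_mul]
    field_simp
  rw [hLHS, hRHS]
end

section
/- Let G be a finite group acting on a finite set X, let Y be a finite set, and let l : X → Y. Fix x ∈ X with k = |l(G•x)| distinct ground-truth labels on its orbit, and suppose f : X → Y is constant on the orbit G•x. Then the fraction of correctly classified points in the orbit satisfies (1/|G•x|)·Σ_{x'∈G•x} [f(x') = l(x')] ≤ 1 − (k − 1)/|G•x| ≤ 1 − (k − 1)/|G|. -/
/-- Per-orbit accuracy bound (loose version): if the orbit of `x` carries `k` distinct
ground-truth labels and `f` is constant on the orbit, then the fraction of correctly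
classified points in the orbit is at most `1 - (k-1)/|G•x| ≤ 1 - (k-1)/|G|`. -/
theorem orbit_accuracy_le_one_sub
    {G X Y : Type*} [Group G] [Fintype G] [Fintype X] [Fintype Y]
    [MulAction G X] [DecidableEq Y]
    (l : X → Y) (x : X) (k : ℕ)
    (hk : k = Set.ncard (l '' MulAction.orbit G x))
    (f : X → Y)
    (hf : ∀ x' ∈ MulAction.orbit G x, ∀ x'' ∈ MulAction.orbit G x, f x' = f x'') :
    (1 / (Set.ncard (MulAction.orbit G x) : ℝ)) *
        ∑ x' ∈ (MulAction.orbit G x).toFinite.toFinset,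
          (if f x' = l x' then (1 : ℝ) else 0) ≤
        1 - ((k : ℝ) - 1) / (Set.ncard (MulAction.orbit G x) : ℝ) ∧
      1 - ((k : ℝ) - 1) / (Set.ncard (MulAction.orbit G x) : ℝ) ≤
        1 - ((k : ℝ) - 1) / (Fintype.card G : ℝ) := by
  classical
  set S : Finset X := (MulAction.orbit G x).toFinite.toFinset with hS
  have hmemS : ∀ x', x' ∈ S ↔ x' ∈ MulAction.orbit G x := by
    intro x'; rw [hS]; exact Set.Finite.mem_toFinset _
  have hxS : x ∈ S := (hmemS x).2 (MulAction.mem_orbit_self x)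
  have hcardS : S.card = Set.ncard (MulAction.orbit G x) := by
    rw [hS, Set.ncard_eq_toFinset_card _ (MulAction.orbit G x).toFinite]
  -- image of orbit under l as a finset
  have himg : S.image l = (l '' MulAction.orbit G x).toFinite.toFinset := by
    ext y
    simp [hmemS, Set.Finite.mem_toFinset, Set.mem_image]
  have hkcard : k = (S.image l).card := by
    rw [himg, hk, Set.ncard_eq_toFinset_card _ (l '' MulAction.orbit G x).toFinite]
  -- the filter of correctly classified points
  set T : Finset X := S.filter (fun x' => f x' = l x') with hT
  -- key: on the orbit, f is constantly f x
  have hconst : ∀ x' ∈ S, f x' = f x := by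
    intro x' hx'
    exact hf x' ((hmemS x').1 hx') x (MulAction.mem_orbit_self x)
  -- points of S \ T hit every label except possibly f x
  have hsub : (S.image l).erase (f x) ⊆ (S \ T).image l := by
    intro y hy
    rw [Finset.mem_erase] at hy
    obtain ⟨hy1, hy2⟩ := hy
    rw [Finset.mem_image] at hy2
    obtain ⟨z, hz, hzy⟩ := hy2
    refine Finset.mem_image.2 ⟨z, ?_, hzy⟩
    rw [Finset.mem_sdiff]
    refine ⟨hz, ?_⟩
    rw [hT, Finset.mem_filter]
    rintro ⟨-, hfz⟩
    apply hy1
    rw [← hzy, ← hfz, hconst z hz]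
  have hk1 : 1 ≤ k := by
    rw [hkcard]
    exact Finset.card_pos.2 ⟨l x, Finset.mem_image_of_mem l hxS⟩
  have hkey : T.card + (k - 1) ≤ S.card := by
    have h1 : k - 1 ≤ ((S.image l).erase (f x)).card := by
      have := Finset.pred_card_le_card_erase (s := S.image l) (a := f x)
      omega
    have h2 : ((S \ T).image l).card ≤ (S \ T).card := Finset.card_image_le
    have h3 : (S \ T).card = S.card - T.card :=
      Finset.card_sdiff_of_subset (Finset.filter_subset _ _)
    have h4 : T.card ≤ S.card := Finset.card_filter_le _ _
    have h5 := Finset.card_le_card hsub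
    omega
  -- orbit size positive and ≤ |G|
  have hSpos : 0 < S.card := Finset.card_pos.2 ⟨x, hxS⟩
  have hSleG : S.card ≤ Fintype.card G := by
    have : S ⊆ Finset.image (fun g : G => g • x) Finset.univ := by
      intro x' hx'
      obtain ⟨g, hg⟩ := (hmemS x').1 hx'
      exact Finset.mem_image.2 ⟨g, Finset.mem_univ g, hg⟩
    calc S.card ≤ (Finset.image (fun g : G => g • x) Finset.univ).card :=
          Finset.card_le_card this
      _ ≤ Fintype.card G := Finset.card_image_le.trans (by simp)
  -- sum equals T.card
  have hsum : ∑ x' ∈ S, (if f x' = l x' then (1 : ℝ) else 0) = (T.card : ℝ) := by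
    rw [hT, Finset.sum_boole]
  have hn : (0 : ℝ) < (S.card : ℝ) := by exact_mod_cast hSpos
  constructor
  · rw [← hcardS, hsum, one_div, inv_mul_eq_div]
    rw [div_le_iff₀ hn, sub_mul, one_mul, div_mul_cancel₀ _ (ne_of_gt hn)]
    have : (T.card : ℝ) + ((k : ℝ) - 1) ≤ (S.card : ℝ) := by
      have : ((T.card + (k - 1) : ℕ) : ℝ) ≤ ((S.card : ℕ) : ℝ) := by
        exact_mod_cast hkey
      push_cast [Nat.cast_sub hk1] at this
      linarith
    linarith
  · rw [← hcardS]
    apply sub_le_sub_left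
    apply div_le_div_of_nonneg_left _ hn (by exact_mod_cast hSleG)
    have : (1 : ℝ) ≤ (k : ℝ) := by exact_mod_cast hk1
    linarith
end

section
/- Let σ : X → X be an involution of a finite set X with no fixed points, let l : X → Y be a labeling into a finite set Y satisfying l(σ(x)) ≠ l(x) for every x ∈ X, and let μ be a σ-invariant probability mass function on X (μ(σ(x)) = μ(x) for all x). Then every σ-invariant classifier f : X → Y (f(σ(x)) = f(x) for all x) has accuracy acc(f) = Σ_{x∈X} μ(x)·[f(x) = l(x)] ≤ 1/2. -/
/-- Incorrect equivariance example (Figure 2c): if `σ` is a fixed-point-free involution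
of a finite set `X` that always changes the ground-truth label, then every
`σ`-invariant classifier has accuracy at most `1/2`. -/
theorem involution_invariant_classifier_accuracy_le_half
    {X Y : Type*} [Fintype X] [Fintype Y] [DecidableEq Y]
    (σ : X → X) (hσσ : ∀ x, σ (σ x) = x) (hσfix : ∀ x, σ x ≠ x)
    (l : X → Y) (hl : ∀ x, l (σ x) ≠ l x)
    (μ : X → ℝ)
    (hμ0 : ∀ x, 0 ≤ μ x) (hμ1 : ∑ x, μ x = 1)
    (hμσ : ∀ x, μ (σ x) = μ x)
    (f : X → Y) (hf : ∀ x, f (σ x) = f x) :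
    ∑ x, μ x * (if f x = l x then (1 : ℝ) else 0) ≤ 1 / 2 := by
  set g : X → ℝ := fun x => μ x * (if f x = l x then (1 : ℝ) else 0) with hg
  have hinv : Function.Involutive σ := hσσ
  have hs : ∑ x, g (σ x) = ∑ x, g x :=
    Fintype.sum_equiv hinv.toPerm _ _ (fun x => rfl)
  have key : ∀ x, g x + g (σ x) ≤ μ x := by
    intro x
    simp only [hg, hμσ, hf]
    by_cases h : f x = l x
    · have h2 : l x ≠ l (σ x) := fun h3 => hl x h3.symm
      simp [h, h2]
    · have := mul_nonneg (hμ0 x) (by positivity :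
        (0:ℝ) ≤ if f x = l (σ x) then (1:ℝ) else 0)
      simp only [h, if_false, mul_zero, zero_add]
      calc μ x * (if f x = l (σ x) then (1:ℝ) else 0)
          ≤ μ x * 1 := by
            apply mul_le_mul_of_nonneg_left _ (hμ0 x)
            split <;> norm_num
        _ = μ x := mul_one _
  have h2 : 2 * ∑ x, g x ≤ 1 := by
    calc 2 * ∑ x, g x = ∑ x, g x + ∑ x, g (σ x) := by rw [hs]; ring
      _ = ∑ x, (g x + g (σ x)) := (Finset.sum_add_distrib).symm
      _ ≤ ∑ x, μ x := Finset.sum_le_sum fun x _ => key x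
      _ = 1 := hμ1
  linarith
end

section
/- Let σ : X → X be an involution of a finite set X with no fixed points, let l : X → ZMod 8 be a labeling satisfying l(σ(x)) = −l(x) for every x ∈ X, and let μ be a σ-invariant probability mass function on X such that μ({x : l(x) = j}) = 1/8 for every j ∈ ZMod 8. Then every σ-invariant classifier f : X → ZMod 8 (f(σ(x)) = f(x) for all x) has accuracy acc(f) = Σ_{x∈X} μ(x)·[f(x) = l(x)] ≤ 5/8. -/
/-- The invert-label example of Section 5: labels lie in `ZMod 8`, `σ` is a
fixed-point-free involution negating the ground-truth label, each label has mass `1/8`,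
and `μ` is `σ`-invariant. Then every `σ`-invariant classifier has accuracy at most
`5/8 = 0.625`. -/
theorem invert_label_accuracy_le
    {X : Type*} [Fintype X]
    (σ : X → X) (hσσ : ∀ x, σ (σ x) = x) (hσfix : ∀ x, σ x ≠ x)
    (l : X → ZMod 8) (hl : ∀ x, l (σ x) = - l x)
    (μ : X → ℝ)
    (hμ0 : ∀ x, 0 ≤ μ x) (hμ1 : ∑ x, μ x = 1)
    (hμσ : ∀ x, μ (σ x) = μ x)
    (hmass : ∀ j : ZMod 8,
      ∑ x ∈ Finset.univ.filter (fun x : X => l x = j), μ x = 1 / 8)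
    (f : X → ZMod 8) (hf : ∀ x, f (σ x) = f x) :
    ∑ x, μ x * (if f x = l x then (1 : ℝ) else 0) ≤ 5 / 8 := by
  have hinv : Function.Involutive σ := hσσ
  set e : Equiv.Perm X := hinv.toPerm σ with he
  have key : ∑ x, μ x * (if f x = l x then (1 : ℝ) else 0)
      = ∑ x, μ x * (if f x = - l x then (1 : ℝ) else 0) := by
    rw [← Equiv.sum_comp e (fun x => μ x * (if f x = l x then (1 : ℝ) else 0))]
    refine Finset.sum_congr rfl fun x _ => ?_
    have : e x = σ x := rfl
    rw [this, hμσ, hf, hl]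
  have h2 : (2 : ℝ) * ∑ x, μ x * (if f x = l x then (1 : ℝ) else 0)
      = ∑ x, μ x * ((if f x = l x then (1 : ℝ) else 0)
          + (if f x = - l x then (1 : ℝ) else 0)) := by
    rw [two_mul]
    nth_rewrite 2 [key]
    rw [← Finset.sum_add_distrib]
    exact Finset.sum_congr rfl fun x _ => (mul_add _ _ _).symm
  have hpt : ∀ x, μ x * ((if f x = l x then (1 : ℝ) else 0)
          + (if f x = - l x then (1 : ℝ) else 0))
      ≤ μ x * ((if l x = 0 then (1 : ℝ) else 0)
          + (if l x = 4 then (1 : ℝ) else 0) + 1) := by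
    intro x
    apply mul_le_mul_of_nonneg_left _ (hμ0 x)
    by_cases hb : l x = - l x
    · have h04 : l x = 0 ∨ l x = 4 := by
        have : ∀ b : ZMod 8, b = -b → b = 0 ∨ b = 4 := by decide
        exact this _ hb
      rw [← hb]
      rcases h04 with h | h <;> rw [h]
      · simp only [if_pos rfl, if_neg (show (0 : ZMod 8) ≠ 4 by decide)]
        split <;> norm_num
      · simp only [if_pos rfl, if_neg (show (4 : ZMod 8) ≠ 0 by decide)]
        split <;> norm_num
    · have h0 : l x ≠ 0 := fun h => hb (by rw [h]; simp)
      have h4 : l x ≠ 4 := fun h => hb (by rw [h]; decide)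
      simp only [if_neg h0, if_neg h4]
      by_cases h1 : f x = l x
      · have h2 : f x ≠ - l x := fun h => hb (h1 ▸ h)
        rw [if_pos h1, if_neg h2]; norm_num
      · rw [if_neg h1]; split <;> norm_num
  have hsum : ∑ x, μ x * ((if f x = l x then (1 : ℝ) else 0)
          + (if f x = - l x then (1 : ℝ) else 0))
      ≤ ∑ x, μ x * ((if l x = 0 then (1 : ℝ) else 0)
          + (if l x = 4 then (1 : ℝ) else 0) + 1) :=
    Finset.sum_le_sum fun x _ => hpt x
  have hm : ∀ j : ZMod 8, ∑ x, μ x * (if l x = j then (1 : ℝ) else 0) = 1 / 8 := by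
    intro j
    rw [← hmass j, Finset.sum_filter]
    exact Finset.sum_congr rfl fun x _ => by split <;> simp
  have hrhs : ∑ x, μ x * ((if l x = 0 then (1 : ℝ) else 0)
          + (if l x = 4 then (1 : ℝ) else 0) + 1) = 5 / 4 := by
    have expand : ∀ x, μ x * ((if l x = 0 then (1 : ℝ) else 0)
          + (if l x = 4 then (1 : ℝ) else 0) + 1)
        = μ x * (if l x = 0 then (1 : ℝ) else 0)
          + μ x * (if l x = 4 then (1 : ℝ) else 0) + μ x := fun x => by ring
    rw [Finset.sum_congr rfl fun x _ => expand x]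
    rw [Finset.sum_add_distrib, Finset.sum_add_distrib, hm 0, hm 4, hμ1]
    norm_num
  rw [hrhs] at hsum
  rw [← h2] at hsum
  linarith
end
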